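/- arXiv:2304.04594 — 6 statements merged into one kernel-verified Lean document; each statement's English description precedes it below -/
import Mathlib

section
/- Let M and N be mutually polar retractions on a real vector space X such that M is subadditive with respect to the order induced by 𝓜 = MX (i.e., M(x+y) − Mx − My ∈ −𝓜 for all x, y) and N is subadditive with respect to the order induced by 𝓝 = NX, and suppose both 𝓜 and 𝓝 are generating cones (𝓜 − 𝓜 = X and 𝓝 − 𝓝 = X). Then 𝓝 = −𝓜. -/
def IsConeSet {X : Type*} [AddCommGroup X] [Module ℝ X] (K : Set X) : Prop :=
  (0 : X) ∈ K ∧ (∀ x ∈ K, ∀ y ∈ K, x + y ∈ K) ∧ ∀ c : ℝ, 0 ≤ c → ∀ x ∈ K, c • x ∈ K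

theorem stmt2 {X : Type*} [AddCommGroup X] [Module ℝ X] (M N : X → X)
    (hM : IsConeSet (Set.range M)) (hN : IsConeSet (Set.range N))
    (hMN : ∀ x, M x + N x = x)
    (hMN0 : ∀ x, M (N x) = 0) (hNM0 : ∀ x, N (M x) = 0)
    (hMsub : ∀ x y, M x + M y - M (x + y) ∈ Set.range M)
    (hNsub : ∀ x y, N x + N y - N (x + y) ∈ Set.range N)
    (hMgen : ∀ x : X, ∃ u ∈ Set.range M, ∃ v ∈ Set.range M, x = u - v)
    (hNgen : ∀ x : X, ∃ u ∈ Set.range N, ∃ v ∈ Set.range N, x = u - v) :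
    Set.range N = -(Set.range M) := by
  have hMfix : ∀ y, M (M y) = M y := by
    intro y
    have h := hMN (M y)
    rw [hNM0] at h
    simpa using h
  have hNfix : ∀ y, N (N y) = N y := by
    intro y
    have h := hMN (N y)
    rw [hMN0] at h
    simpa using h
  ext x
  rw [Set.mem_neg]
  constructor
  · rintro ⟨y, rfl⟩
    obtain ⟨u, ⟨a, rfl⟩, v, ⟨b, rfl⟩, h⟩ := hMgen (-(N y))
    have hsum : N y + M a = M b := by
      have h2 : M a - M b = -(N y) := h.symm
      rw [sub_eq_iff_eq_add] at h2
      rw [h2]; abel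
    have key := hMsub (N y) (M a)
    rw [hMN0, hMfix, hsum, hMfix] at key
    have : -N y = 0 + M a - M b := by rw [h]; abel
    rw [this]
    exact key
  · rintro ⟨a, ha⟩
    obtain ⟨u, ⟨b, rfl⟩, v, ⟨c, rfl⟩, h⟩ := hNgen x
    have hsum : M a + N b = N c := by
      rw [ha, h]; abel
    have key := hNsub (M a) (N b)
    rw [hNM0, hNfix, hsum, hNfix] at key
    have : x = 0 + N b - N c := by rw [h]; abel
    rw [this]
    exact key
end

section
/- Let M and N be mutually polar retractions on a real vector space X with generating ranges 𝓜 and 𝓝, and suppose 𝓜 is generating. Then the set {Mx + My − M(x+y) : x, y ∈ X} equals 𝓜 (assuming 𝓝 is generating). -/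
theorem stmt3 {X : Type*} [AddCommGroup X] [Module ℝ X] (M N : X → X)
    (hM : IsConeSet (Set.range M)) (hN : IsConeSet (Set.range N))
    (hMN : ∀ x, M x + N x = x)
    (hMN0 : ∀ x, M (N x) = 0) (hNM0 : ∀ x, N (M x) = 0)
    (hMsub : ∀ x y, M x + M y - M (x + y) ∈ Set.range M)
    (hNgen : ∀ x : X, ∃ u ∈ Set.range N, ∃ v ∈ Set.range N, x = u - v) :
    {z : X | ∃ x y, z = M x + M y - M (x + y)} = Set.range M := by
  ext z
  simp only [Set.mem_setOf_eq]
  constructor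
  · rintro ⟨x, y, rfl⟩
    exact hMsub x y
  · rintro ⟨a, rfl⟩
    obtain ⟨u, ⟨b, rfl⟩, v, ⟨c, rfl⟩, h⟩ := hNgen (M a)
    refine ⟨M a, N c, ?_⟩
    have hMM : M (M a) = M a := by
      have h1 := hMN (M a)
      rw [hNM0] at h1
      simpa using h1
    have hsum : M a + N c = N b := by
      rw [h]; abel
    rw [hMM, hMN0, hsum, hMN0]
    abel
end

section
/- Let M and N be mutually polar subadditive retractions on a real vector space X whose ranges 𝓜 and 𝓝 are both generating cones. Then M is isotone with respect to the order induced by 𝓜: if x ≤_𝓜 y then Mx ≤_𝓜 My. -/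
theorem stmt4 {X : Type*} [AddCommGroup X] [Module ℝ X] (M N : X → X)
    (hM : IsConeSet (Set.range M)) (hN : IsConeSet (Set.range N))
    (hMN : ∀ x, M x + N x = x)
    (hMN0 : ∀ x, M (N x) = 0) (hNM0 : ∀ x, N (M x) = 0)
    (hMsub : ∀ x y, M x + M y - M (x + y) ∈ Set.range M)
    (hNsub : ∀ x y, N x + N y - N (x + y) ∈ Set.range N)
    (hMgen : ∀ x : X, ∃ u ∈ Set.range M, ∃ v ∈ Set.range M, x = u - v)
    (hNgen : ∀ x : X, ∃ u ∈ Set.range N, ∃ v ∈ Set.range N, x = u - v) :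
    ∀ x y : X, y - x ∈ Set.range M → M y - M x ∈ Set.range M := by
  -- basic facts
  have hMfix : ∀ a ∈ Set.range M, M a = a := by
    rintro a ⟨w, rfl⟩
    have h := hMN (M w)
    rwa [hNM0 w, add_zero] at h
  have hNfix : ∀ b ∈ Set.range N, N b = b := by
    rintro b ⟨w, rfl⟩
    have h := hMN (N w)
    rwa [hMN0 w, zero_add] at h
  have hNzM : ∀ a ∈ Set.range M, N a = 0 := by
    rintro a ⟨w, rfl⟩; exact hNM0 w
  have hMzN : ∀ b ∈ Set.range N, M b = 0 := by
    rintro b ⟨w, rfl⟩; exact hMN0 w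
  -- Lemma A : a ∈ 𝓜 → -a ∈ 𝓝
  have lemA : ∀ a ∈ Set.range M, -a ∈ Set.range N := by
    intro a ha
    obtain ⟨u, hu, v, hv, hav⟩ := hNgen a
    have h1 := hNsub a v
    have hav' : a + v = u := by rw [hav]; abel
    rw [hNzM a ha, hNfix v hv, hav', hNfix u hu, zero_add] at h1
    have : v - u = -a := by rw [hav]; abel
    rwa [this] at h1
  -- Lemma B : b ∈ 𝓝 → -b ∈ 𝓜
  have lemB : ∀ b ∈ Set.range N, -b ∈ Set.range M := by
    intro b hb
    obtain ⟨u, hu, v, hv, hbv⟩ := hMgen b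
    have h1 := hMsub b v
    have hbv' : b + v = u := by rw [hbv]; abel
    rw [hMzN b hb, hMfix v hv, hbv', hMfix u hu, zero_add] at h1
    have : v - u = -b := by rw [hbv]; abel
    rwa [this] at h1
  -- main argument
  intro x y hxy
  have hNy : -(N y) ∈ Set.range M := lemB (N y) ⟨y, rfl⟩
  have hw : M y - x ∈ Set.range M := by
    have h := hM.2.1 _ hNy _ hxy
    have heq : -(N y) + (y - x) = M y - x := by
      have hMy : M y = y - N y := eq_sub_of_add_eq (hMN y)
      rw [hMy]; abel
    rwa [heq] at h
  have hnw : -(M y - x) ∈ Set.range N := lemA _ hw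
  have h2 := hMsub (M y) (-(M y - x))
  have e1 : M y + -(M y - x) = x := by abel
  rw [e1, hMfix (M y) ⟨y, rfl⟩, hMzN _ hnw, add_zero] at h2
  exact h2
end

section
/- Let M and N be mutually polar retractions on a real vector space X with 𝓝 = −𝓜, suppose 𝓜 is a lattice cone (every pair of elements has a supremum in the order ≤_𝓜), and suppose M is isotone w.r.t. ≤_𝓜. Then M equals the positive part mapping of the lattice order induced by 𝓜, i.e., Mx = sup{0, x} for all x ∈ X. -/
theorem stmt6 {X : Type*} [AddCommGroup X] [Module ℝ X] (M N : X → X)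
    (hM : IsConeSet (Set.range M)) (hN : IsConeSet (Set.range N))
    (hMN : ∀ x, M x + N x = x)
    (hMN0 : ∀ x, M (N x) = 0) (hNM0 : ∀ x, N (M x) = 0)
    (hNM : Set.range N = -(Set.range M))
    -- 𝓜 is a lattice cone: every pair has a supremum w.r.t. x ≤ y ↔ y - x ∈ 𝓜
    (hlat : ∀ u v : X, ∃ s, s - u ∈ Set.range M ∧ s - v ∈ Set.range M ∧
      ∀ w, w - u ∈ Set.range M → w - v ∈ Set.range M → w - s ∈ Set.range M)
    -- M is isotone
    (hiso : ∀ x y : X, y - x ∈ Set.range M → M y - M x ∈ Set.range M) :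
    -- M x is the supremum of {0, x}
    ∀ x : X, M x ∈ Set.range M ∧ M x - x ∈ Set.range M ∧
      ∀ w, w ∈ Set.range M → w - x ∈ Set.range M → w - M x ∈ Set.range M := by
  -- M restricts to the identity on its range
  have hMM : ∀ y : X, M (M y) = M y := by
    intro y
    have h := hMN (M y)
    rw [hNM0 y, add_zero] at h
    exact h
  intro x
  refine ⟨Set.mem_range_self x, ?_, ?_⟩
  · -- M x - x = -(N x) ∈ range M since range N = -range M
    have h1 : N x ∈ -(Set.range M) := hNM ▸ Set.mem_range_self x
    have h2 : -(N x) ∈ Set.range M := Set.mem_neg.mp h1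
    have : M x - x = -(N x) := by
      calc M x - x = M x - (M x + N x) := by rw [hMN x]
        _ = -(N x) := by abel
    rwa [this]
  · intro w hw hwx
    obtain ⟨u, hu⟩ := hw
    have hMw : M w = w := by rw [← hu, hMM]
    have := hiso x w hwx
    rwa [hMw] at this
end

section
/- Let M and N be mutually polar σ-monotone continuous retractions on a real vector space X with generating, σ-monotone complete ranges 𝓜 and 𝓝 satisfying 𝓝 = −𝓜. If M is isotone with respect to ≤_𝓜, then 𝓜 is a lattice cone: every pair u, v ∈ X has a supremum with respect to ≤_𝓜. -/
theorem stmt16 {X : Type*} [AddCommGroup X] [Module ℝ X] (M N : X → X)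
    (hM : IsConeSet (Set.range M)) (hN : IsConeSet (Set.range N))
    (hMN : ∀ x, M x + N x = x)
    (hMN0 : ∀ x, M (N x) = 0) (hNM0 : ∀ x, N (M x) = 0)
    (hNM : Set.range N = -(Set.range M))
    (hMgen : ∀ x : X, ∃ u ∈ Set.range M, ∃ v ∈ Set.range M, x = u - v)
    -- σ-monotone completeness of 𝓜's order
    (hcomp : ∀ a : ℕ → X, (∀ n, a (n + 1) - a n ∈ Set.range M) →
      (∃ b, ∀ n, b - a n ∈ Set.range M) →
      ∃ s, (∀ n, s - a n ∈ Set.range M) ∧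
        ∀ w, (∀ n, w - a n ∈ Set.range M) → w - s ∈ Set.range M)
    -- M is σ-monotone continuous
    (hMcont : ∀ (a : ℕ → X) (s : X), (∀ n, a (n + 1) - a n ∈ Set.range M) →
      ((∀ n, s - a n ∈ Set.range M) ∧
        ∀ w, (∀ n, w - a n ∈ Set.range M) → w - s ∈ Set.range M) →
      (∀ n, M (a (n + 1)) - M (a n) ∈ Set.range M) ∧
      (∀ n, M s - M (a n) ∈ Set.range M) ∧
      ∀ w, (∀ n, w - M (a n) ∈ Set.range M) → w - M s ∈ Set.range M)
    -- M is isotone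
    (hiso : ∀ x y : X, y - x ∈ Set.range M → M y - M x ∈ Set.range M) :
    -- 𝓜 is a lattice cone
    ∀ u v : X, ∃ s, s - u ∈ Set.range M ∧ s - v ∈ Set.range M ∧
      ∀ w, w - u ∈ Set.range M → w - v ∈ Set.range M → w - s ∈ Set.range M := by
  intro u v
  have hidem : ∀ x ∈ Set.range M, M x = x := by
    rintro x ⟨t, rfl⟩
    have := hMN (M t)
    rw [hNM0 t, add_zero] at this
    exact this
  refine ⟨u + M (v - u), ⟨v - u, by abel⟩, ?_, ?_⟩
  · have hNmem : N (v - u) ∈ -(Set.range M) := hNM ▸ ⟨v - u, rfl⟩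
    have hmem : -(N (v - u)) ∈ Set.range M := Set.mem_neg.mp hNmem
    have : u + M (v - u) - v = -(N (v - u)) := by
      have h := hMN (v - u)
      have hh : M (v - u) = (v - u) - N (v - u) := eq_sub_of_add_eq h
      rw [hh]; abel
    rw [this]; exact hmem
  · intro w hwu hwv
    have h1 : (w - u) - (v - u) ∈ Set.range M := by
      have : (w - u) - (v - u) = w - v := by abel
      rw [this]; exact hwv
    have h2 := hiso (v - u) (w - u) h1
    rw [hidem _ hwu] at h2
    have : w - (u + M (v - u)) = (w - u) - M (v - u) := by abel
    rw [this]; exact h2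
end

section
/- Main theorem: Let M and N be mutually polar retractions on a real vector space X with generating, σ-monotone complete ranges 𝓜 and 𝓝, and suppose M and N are σ-monotone continuous and subadditive (with respect to the orders induced by 𝓜, 𝓝 respectively). Then 𝓜 is a lattice cone, (X, ≤_𝓜) is a σ-Dedekind complete Riesz space, and Mx = x ∨ 0 and Nx = −((−x) ∨ 0) for all x (suprema taken in ≤_𝓜). -/
/-- σ-monotone completeness of the order induced by the cone K. -/
def SigmaMonotoneComplete {X : Type*} [AddCommGroup X] (K : Set X) : Prop :=
  ∀ a : ℕ → X, (∀ n, a (n + 1) - a n ∈ K) → (∃ b, ∀ n, b - a n ∈ K) →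
    ∃ s, (∀ n, s - a n ∈ K) ∧ ∀ w, (∀ n, w - a n ∈ K) → w - s ∈ K

/-- σ-monotone continuity of T w.r.t. the order induced by the cone K. -/
def SigmaMonotoneContinuous {X : Type*} [AddCommGroup X] (K : Set X) (T : X → X) : Prop :=
  ∀ (a : ℕ → X) (s : X), (∀ n, a (n + 1) - a n ∈ K) →
    ((∀ n, s - a n ∈ K) ∧ ∀ w, (∀ n, w - a n ∈ K) → w - s ∈ K) →
    (∀ n, T (a (n + 1)) - T (a n) ∈ K) ∧
    (∀ n, T s - T (a n) ∈ K) ∧ ∀ w, (∀ n, w - T (a n) ∈ K) → w - T s ∈ K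

theorem stmt17 {X : Type*} [AddCommGroup X] [Module ℝ X] (M N : X → X)
    (hM : IsConeSet (Set.range M)) (hN : IsConeSet (Set.range N))
    (hMN : ∀ x, M x + N x = x)
    (hMN0 : ∀ x, M (N x) = 0) (hNM0 : ∀ x, N (M x) = 0)
    (hMgen : ∀ x : X, ∃ u ∈ Set.range M, ∃ v ∈ Set.range M, x = u - v)
    (hNgen : ∀ x : X, ∃ u ∈ Set.range N, ∃ v ∈ Set.range N, x = u - v)
    (hMcomp : SigmaMonotoneComplete (Set.range M))
    (hNcomp : SigmaMonotoneComplete (Set.range N))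
    (hMcont : SigmaMonotoneContinuous (Set.range M) M)
    (hNcont : SigmaMonotoneContinuous (Set.range N) N)
    (hMsub : ∀ x y, M x + M y - M (x + y) ∈ Set.range M)
    (hNsub : ∀ x y, N x + N y - N (x + y) ∈ Set.range N) :
    -- 𝓜 is a lattice cone
    (∀ u v : X, ∃ s, s - u ∈ Set.range M ∧ s - v ∈ Set.range M ∧
      ∀ w, w - u ∈ Set.range M → w - v ∈ Set.range M → w - s ∈ Set.range M) ∧
    -- (X, ≤_𝓜) is σ-Dedekind complete
    (∀ S : Set X, S.Countable → S.Nonempty → (∃ b, ∀ x ∈ S, b - x ∈ Set.range M) →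
      ∃ s, (∀ x ∈ S, s - x ∈ Set.range M) ∧
        ∀ w, (∀ x ∈ S, w - x ∈ Set.range M) → w - s ∈ Set.range M) ∧
    -- M x = x ∨ 0 : M x is the least upper bound of {0, x} w.r.t. ≤_𝓜
    (∀ x : X, M x ∈ Set.range M ∧ M x - x ∈ Set.range M ∧
      ∀ w, w ∈ Set.range M → w - x ∈ Set.range M → w - M x ∈ Set.range M) ∧
    -- N x = -((-x) ∨ 0) : -(N x) is the least upper bound of {0, -x} w.r.t. ≤_𝓜
    (∀ x : X, -(N x) ∈ Set.range M ∧ -(N x) - (-x) ∈ Set.range M ∧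
      ∀ w, w ∈ Set.range M → w - (-x) ∈ Set.range M → w - (-(N x)) ∈ Set.range M) := by

  -- basic retraction facts
  have hMM : ∀ x, M (M x) = M x := by
    intro x
    have h := hMN (M x)
    rw [hNM0 x] at h
    simpa using h
  have hNN : ∀ x, N (N x) = N x := by
    intro x
    have h := hMN (N x)
    rw [hMN0 x] at h
    simpa using h
  have hfixM : ∀ u ∈ Set.range M, M u = u := by rintro u ⟨y, rfl⟩; exact hMM y
  have hfixN : ∀ v ∈ Set.range N, N v = v := by rintro v ⟨y, rfl⟩; exact hNN y
  have hMonN : ∀ v ∈ Set.range N, M v = 0 := by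
    intro v hv
    have h := hMN v
    rw [hfixN v hv] at h
    exact add_eq_right.mp h
  have hNonM : ∀ u ∈ Set.range M, N u = 0 := by
    intro u hu
    have h := hMN u
    rw [hfixM u hu] at h
    exact add_eq_left.mp h
  have zeroK : (0 : X) ∈ Set.range M := hM.1
  have addK : ∀ x ∈ Set.range M, ∀ y ∈ Set.range M, x + y ∈ Set.range M := hM.2.1
  -- the key inequality : M x ≥ x in the K-order
  have key1 : ∀ x : X, M x - x ∈ Set.range M := by
    intro x
    obtain ⟨u, hu, v, hv, rfl⟩ := hMgen x
    have h := hMsub (u - v) v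
    have e0 : u - v + v = u := by abel
    rw [e0, hfixM v hv, hfixM u hu] at h
    have e : M (u - v) + v - u = M (u - v) - (u - v) := by abel
    rwa [e] at h
  have key2 : ∀ x : X, N x - x ∈ Set.range N := by
    intro x
    obtain ⟨u, hu, v, hv, rfl⟩ := hNgen x
    have h := hNsub (u - v) v
    have e0 : u - v + v = u := by abel
    rw [e0, hfixN v hv, hfixN u hu] at h
    have e : N (u - v) + v - u = N (u - v) - (u - v) := by abel
    rwa [e] at h
  have negK : ∀ u ∈ Set.range M, -u ∈ Set.range N := by
    intro u hu
    have h := key2 u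
    rw [hNonM u hu, zero_sub] at h
    exact h
  have hMneg0 : ∀ u ∈ Set.range M, M (-u) = 0 := fun u hu => hMonN _ (negK u hu)
  -- monotonicity of M
  have mono : ∀ x y : X, y - x ∈ Set.range M → M y - M x ∈ Set.range M := by
    intro x y hxy
    have h := hMsub y (x - y)
    have e1 : y + (x - y) = x := by abel
    have e2 : x - y = -(y - x) := by abel
    rw [e1, e2, hMneg0 (y - x) hxy, add_zero] at h
    exact h
  -- least upper bound property of M x
  have lub3 : ∀ x w : X, w ∈ Set.range M → w - x ∈ Set.range M →
      w - M x ∈ Set.range M := by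
    intro x w hw hwx
    have h := mono x w hwx
    rwa [hfixM w hw] at h
  have lubM : ∀ x : X, M x ∈ Set.range M ∧ M x - x ∈ Set.range M ∧
      ∀ w, w ∈ Set.range M → w - x ∈ Set.range M → w - M x ∈ Set.range M :=
    fun x => ⟨⟨x, rfl⟩, key1 x, fun w hw hwx => lub3 x w hw hwx⟩
  -- binary suprema
  have latt : ∀ u v : X, ∃ s, s - u ∈ Set.range M ∧ s - v ∈ Set.range M ∧
      ∀ w, w - u ∈ Set.range M → w - v ∈ Set.range M → w - s ∈ Set.range M := by
    intro u v
    refine ⟨v + M (u - v), ?_, ?_, ?_⟩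
    · have h := key1 (u - v)
      have e : v + M (u - v) - u = M (u - v) - (u - v) := by abel
      rwa [e]
    · have e : v + M (u - v) - v = M (u - v) := by abel
      rw [e]; exact ⟨_, rfl⟩
    · intro w hwu hwv
      have h := lub3 (u - v) (w - v) hwv (by
        have e : w - v - (u - v) = w - u := by abel
        rwa [e])
      have e : w - (v + M (u - v)) = w - v - M (u - v) := by abel
      rwa [e]
  -- σ-Dedekind completeness
  have comp : ∀ S : Set X, S.Countable → S.Nonempty →
      (∃ b, ∀ x ∈ S, b - x ∈ Set.range M) →
      ∃ s, (∀ x ∈ S, s - x ∈ Set.range M) ∧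
        ∀ w, (∀ x ∈ S, w - x ∈ Set.range M) → w - s ∈ Set.range M := by
    rintro S hc hne ⟨b, hb⟩
    obtain ⟨f, rfl⟩ := Set.Countable.exists_eq_range hc hne
    let a : ℕ → X := fun n => Nat.rec (f 0) (fun k ak => f (k + 1) + M (ak - f (k + 1))) n
    have ha0 : a 0 = f 0 := rfl
    have haS : ∀ n, a (n + 1) = f (n + 1) + M (a n - f (n + 1)) := fun n => rfl
    have inc : ∀ n, a (n + 1) - a n ∈ Set.range M := by
      intro n
      have h := key1 (a n - f (n + 1))
      have e : a (n + 1) - a n = M (a n - f (n + 1)) - (a n - f (n + 1)) := by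
        rw [haS n]; abel
      rwa [e]
    have hbnd : ∀ n, b - a n ∈ Set.range M := by
      intro n
      induction n with
      | zero => rw [ha0]; exact hb (f 0) ⟨0, rfl⟩
      | succ n ih =>
        have h := lub3 (a n - f (n + 1)) (b - f (n + 1)) (hb _ ⟨n + 1, rfl⟩) (by
          have e : b - f (n + 1) - (a n - f (n + 1)) = b - a n := by abel
          rwa [e])
        have e : b - a (n + 1) = b - f (n + 1) - M (a n - f (n + 1)) := by
          rw [haS n]; abel
        rwa [e]
    obtain ⟨s, hs1, hs2⟩ := hMcomp a inc ⟨b, hbnd⟩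
    have hafn : ∀ n, a n - f n ∈ Set.range M := by
      intro n
      cases n with
      | zero => rw [ha0, sub_self]; exact zeroK
      | succ n =>
        have e : a (n + 1) - f (n + 1) = M (a n - f (n + 1)) := by
          rw [haS n]; abel
        rw [e]; exact ⟨_, rfl⟩
    refine ⟨s, ?_, ?_⟩
    · rintro x ⟨n, rfl⟩
      have h := addK _ (hs1 n) _ (hafn n)
      have e : s - a n + (a n - f n) = s - f n := by abel
      rwa [e] at h
    · intro w hw
      apply hs2
      intro n
      induction n with
      | zero => rw [ha0]; exact hw (f 0) ⟨0, rfl⟩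
      | succ n ih =>
        have h := lub3 (a n - f (n + 1)) (w - f (n + 1)) (hw _ ⟨n + 1, rfl⟩) (by
          have e : w - f (n + 1) - (a n - f (n + 1)) = w - a n := by abel
          rwa [e])
        have e : w - a (n + 1) = w - f (n + 1) - M (a n - f (n + 1)) := by
          rw [haS n]; abel
        rwa [e]
  -- the N part
  have part4 : ∀ x : X, -(N x) ∈ Set.range M ∧ -(N x) - (-x) ∈ Set.range M ∧
      ∀ w, w ∈ Set.range M → w - (-x) ∈ Set.range M →
        w - (-(N x)) ∈ Set.range M := by
    intro x
    have hMx : M x = x - N x := eq_sub_of_add_eq (hMN x)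
    have hNx : -(N x) = M x - x := by rw [hMx]; abel
    refine ⟨?_, ?_, ?_⟩
    · rw [hNx]; exact key1 x
    · have e : -(N x) - -x = M x := by rw [hNx]; abel
      rw [e]; exact ⟨x, rfl⟩
    · intro w hw hwx
      have hw' : w + x ∈ Set.range M := by
        have e : w + x = w - -x := by abel
        rw [e]; exact hwx
      have h := lub3 x (w + x) hw' (by
        have e : w + x - x = w := by abel
        rw [e]; exact hw)
      have e : w - -(N x) = w + x - M x := by rw [hNx]; abel
      rwa [e]
  exact ⟨latt, comp, lubM, part4⟩
end
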